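/- arXiv:1304.7446 — 3 statements merged into one kernel-verified Lean document; each statement's English description precedes it below -/
import Mathlib

section
/- For every n, k₁, k₂ ∈ ℕ with k₁ + k₂ ≤ n, the double sum K(n,k₁,k₂) = Σ over l₁,l₂ ≥ 0 with l₁ ≥ k₁, l₂ ≥ k₂ and l₁ + l₂ ≤ n of (-1)^{l₁+l₂} · (1/(l₁-k₁)!) · (1/(l₂-k₂)!) · n!/(n-l₁-l₂)! equals Σ_{l=k₁+k₂}^{n} (-1)^l · n!/(n-l)! · 2^{l-k₁-k₂}/(l-k₁-k₂)! (as rational numbers). -/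
open Finset

lemma sum_inv_fact_mul (m : ℕ) :
    ∑ i ∈ range (m + 1), (1 / (i.factorial : ℚ)) * (1 / ((m - i).factorial : ℚ))
      = 2 ^ m / (m.factorial : ℚ) := by
  have hm : (m.factorial : ℚ) ≠ 0 := by exact_mod_cast m.factorial_ne_zero
  rw [eq_div_iff hm, Finset.sum_mul]
  have : ∀ i ∈ range (m + 1),
      (1 / (i.factorial : ℚ)) * (1 / ((m - i).factorial : ℚ)) * (m.factorial : ℚ)
        = (m.choose i : ℚ) := by
    intro i hi
    rw [Finset.mem_range, Nat.lt_succ_iff] at hi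
    rw [Nat.cast_choose ℚ hi]
    field_simp
  rw [Finset.sum_congr rfl this]
  exact_mod_cast (Nat.sum_range_choose m)

/-- The kernel double sum
`K(n,k₁,k₂) = Σ_{l₁ ≥ k₁, l₂ ≥ k₂, l₁+l₂ ≤ n} (-1)^{l₁+l₂} (1/(l₁-k₁)!)(1/(l₂-k₂)!) n!/(n-l₁-l₂)!`
equals `Σ_{l=k₁+k₂}^{n} (-1)^l · n!/(n-l)! · 2^{l-k₁-k₂}/(l-k₁-k₂)!`. -/
theorem kernel_double_sum (n k₁ k₂ : ℕ) (h : k₁ + k₂ ≤ n) :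
    (∑ p ∈ (range (n + 1) ×ˢ range (n + 1)).filter
        (fun p => k₁ ≤ p.1 ∧ k₂ ≤ p.2 ∧ p.1 + p.2 ≤ n),
      (-1 : ℚ) ^ (p.1 + p.2) * (1 / ((p.1 - k₁).factorial : ℚ))
        * (1 / ((p.2 - k₂).factorial : ℚ)) * (n.descFactorial (p.1 + p.2) : ℚ))
    = ∑ l ∈ Icc (k₁ + k₂) n,
        (-1 : ℚ) ^ l * (n.descFactorial l : ℚ)
          * 2 ^ (l - k₁ - k₂) / ((l - k₁ - k₂).factorial : ℚ) := by
  have step : (∑ p ∈ (range (n + 1) ×ˢ range (n + 1)).filter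
        (fun p => k₁ ≤ p.1 ∧ k₂ ≤ p.2 ∧ p.1 + p.2 ≤ n),
      (-1 : ℚ) ^ (p.1 + p.2) * (1 / ((p.1 - k₁).factorial : ℚ))
        * (1 / ((p.2 - k₂).factorial : ℚ)) * (n.descFactorial (p.1 + p.2) : ℚ))
      = ∑ l ∈ Icc (k₁ + k₂) n, ∑ l₁ ∈ Icc k₁ (l - k₂),
        (-1 : ℚ) ^ l * (1 / ((l₁ - k₁).factorial : ℚ))
          * (1 / ((l - l₁ - k₂).factorial : ℚ)) * (n.descFactorial l : ℚ) := by
    rw [Finset.sum_sigma']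
    apply Finset.sum_nbij' (fun p => ⟨p.1 + p.2, p.1⟩)
      (fun q => (q.2, q.1 - q.2))
    · intro p hp
      simp only [Finset.mem_filter, Finset.mem_product, Finset.mem_range,
        Nat.lt_succ_iff] at hp
      obtain ⟨⟨h1, h2⟩, h3, h4, h5⟩ := hp
      simp only [Finset.mem_sigma, Finset.mem_Icc]
      exact ⟨⟨Nat.add_le_add h3 h4, h5⟩, h3, by omega⟩
    · intro q hq
      simp only [Finset.mem_sigma, Finset.mem_Icc] at hq
      obtain ⟨⟨h1, h2⟩, h3, h4⟩ := hq
      simp only [Finset.mem_filter, Finset.mem_product, Finset.mem_range,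
        Nat.lt_succ_iff]
      refine ⟨⟨by omega, by omega⟩, h3, by omega, by omega⟩
    · intro p hp
      simp only [Finset.mem_filter, Finset.mem_product, Finset.mem_range,
        Nat.lt_succ_iff] at hp
      ext <;> simp <;> omega
    · intro q hq
      simp only [Finset.mem_sigma, Finset.mem_Icc] at hq
      obtain ⟨⟨h1, h2⟩, h3, h4⟩ := hq
      ext <;> simp <;> omega
    · intro p hp
      simp [Nat.add_sub_cancel_left]
  rw [step]
  apply Finset.sum_congr rfl
  intro l hl
  simp only [Finset.mem_Icc] at hl
  have hk : k₁ + k₂ ≤ l := hl.1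
  have hsub : l - k₂ - k₁ = l - k₁ - k₂ := by omega
  calc ∑ l₁ ∈ Icc k₁ (l - k₂),
        (-1 : ℚ) ^ l * (1 / ((l₁ - k₁).factorial : ℚ))
          * (1 / ((l - l₁ - k₂).factorial : ℚ)) * (n.descFactorial l : ℚ)
      = (-1 : ℚ) ^ l * (n.descFactorial l : ℚ) *
        ∑ i ∈ range (l - k₁ - k₂ + 1),
          (1 / (i.factorial : ℚ)) * (1 / ((l - k₁ - k₂ - i).factorial : ℚ)) := by
        rw [Finset.mul_sum]
        rw [show Icc k₁ (l - k₂) = Finset.map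
          ⟨fun i => i + k₁, add_left_injective k₁⟩ (range (l - k₁ - k₂ + 1)) from ?_]
        · rw [Finset.sum_map]
          apply Finset.sum_congr rfl
          intro i hi
          simp only [Finset.mem_range] at hi
          have e1 : i + k₁ - k₁ = i := by omega
          have e2 : l - (i + k₁) - k₂ = l - k₁ - k₂ - i := by omega
          rw [Function.Embedding.coeFn_mk, e1, e2]
          ring
        · ext x
          simp only [Finset.mem_Icc, Finset.mem_map, Finset.mem_range,
            Function.Embedding.coeFn_mk]
          constructor
          · intro ⟨h1, h2⟩; exact ⟨x - k₁, by omega, by omega⟩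
          · rintro ⟨i, hi, rfl⟩
            show k₁ ≤ i + k₁ ∧ i + k₁ ≤ l - k₂
            omega
    _ = (-1 : ℚ) ^ l * (n.descFactorial l : ℚ) *
          (2 ^ (l - k₁ - k₂) / ((l - k₁ - k₂).factorial : ℚ)) := by
        rw [sum_inv_fact_mul]
    _ = _ := by ring
end

section
/- The sequence z_n = Σ_{l=0}^{n} (n!/(n-l)!)·z₀^{l+1} satisfies the discrete quadratic map z_{n+1} - z_n = Σ' over k₁,k₂ ≥ 0 with k₁+k₂ ≤ n of ((-1)^{k₁+k₂+n}/(k₁!·k₂!))·z_{k₁}·z_{k₂}·n!/(n-k₁-k₂)! for all n ∈ ℕ. -/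
open Finset

noncomputable def dqUU (z₀ : ℝ) : PowerSeries ℝ := PowerSeries.mk fun l => z₀ ^ (l + 1)
noncomputable def dqVV : PowerSeries ℝ := PowerSeries.mk fun j => 1 / (j.factorial : ℝ)

lemma dq_coeff_UV (z₀ : ℝ) (p : ℕ) :
    (p.factorial : ℝ) * PowerSeries.coeff p (dqUU z₀ * dqVV)
      = ∑ l ∈ range (p + 1), (p.descFactorial l : ℝ) * z₀ ^ (l + 1) := by
  rw [PowerSeries.coeff_mul, Finset.Nat.sum_antidiagonal_eq_sum_range_succ_mk, Finset.mul_sum]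
  refine Finset.sum_congr rfl fun l hl => ?_
  have hl' : l ≤ p := Nat.lt_succ_iff.mp (mem_range.mp hl)
  simp only [dqUU, dqVV, PowerSeries.coeff_mk]
  have hfac : ((p - l).factorial : ℝ) * (p.descFactorial l : ℝ) = (p.factorial : ℝ) := by
    exact_mod_cast congrArg (Nat.cast (R := ℝ)) (Nat.factorial_mul_descFactorial hl')
  have h0 : ((p - l).factorial : ℝ) ≠ 0 := Nat.cast_ne_zero.mpr (Nat.factorial_ne_zero _)
  field_simp
  linarith [mul_comm ((p - l).factorial : ℝ) ((p.descFactorial l : ℝ) * z₀ ^ (l + 1)),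
    congrArg (· * z₀ ^ (l + 1)) hfac]

lemma dq_coeff_U2 (z₀ : ℝ) (m : ℕ) :
    PowerSeries.coeff m (dqUU z₀ * dqUU z₀) = ((m : ℝ) + 1) * z₀ ^ (m + 2) := by
  rw [PowerSeries.coeff_mul, Finset.Nat.sum_antidiagonal_eq_sum_range_succ_mk]
  have : ∀ a ∈ range (m + 1),
      PowerSeries.coeff a (dqUU z₀) * PowerSeries.coeff (m - a) (dqUU z₀) = z₀ ^ (m + 2) := by
    intro a ha
    have ha' : a ≤ m := Nat.lt_succ_iff.mp (mem_range.mp ha)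
    simp only [dqUU, PowerSeries.coeff_mk, ← pow_add]
    congr 1
    omega
  rw [Finset.sum_congr rfl this, Finset.sum_const, card_range, nsmul_eq_mul]
  push_cast; ring

lemma dq_coeff_V2 (j : ℕ) :
    PowerSeries.coeff j (dqVV * dqVV) = 2 ^ j / (j.factorial : ℝ) := by
  rw [PowerSeries.coeff_mul, Finset.Nat.sum_antidiagonal_eq_sum_range_succ_mk]
  have : ∀ a ∈ range (j + 1),
      PowerSeries.coeff a dqVV * PowerSeries.coeff (j - a) dqVV
        = (j.choose a : ℝ) / (j.factorial : ℝ) := by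
    intro a ha
    have ha' : a ≤ j := Nat.lt_succ_iff.mp (mem_range.mp ha)
    simp only [dqVV, PowerSeries.coeff_mk]
    have hfac : (j.choose a : ℝ) * (a.factorial : ℝ) * ((j - a).factorial : ℝ)
        = (j.factorial : ℝ) := by
      exact_mod_cast congrArg (Nat.cast (R := ℝ)) (Nat.choose_mul_factorial_mul_factorial ha')
    rw [div_mul_div_comm, one_mul,
      div_eq_div_iff (mul_ne_zero (Nat.cast_ne_zero.mpr (Nat.factorial_ne_zero _))
        (Nat.cast_ne_zero.mpr (Nat.factorial_ne_zero _)))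
        (Nat.cast_ne_zero.mpr (Nat.factorial_ne_zero _)), ← hfac]
    ring
  rw [Finset.sum_congr rfl this, ← Finset.sum_div, ← Nat.cast_sum, Nat.sum_range_choose]
  push_cast; ring

lemma dq_key_binom (n m : ℕ) (hm : m ≤ n) :
    ∑ j ∈ range (n + 1 - m), (-1 : ℝ) ^ (m + j + n) * (n.descFactorial (m + j) : ℝ)
        * (2 ^ j / (j.factorial : ℝ))
      = (n.descFactorial m : ℝ) := by
  set N := n - m with hN
  have hrange : n + 1 - m = N + 1 := by omega
  rw [hrange]
  have hterm : ∀ j ∈ range (N + 1),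
      (-1 : ℝ) ^ (m + j + n) * (n.descFactorial (m + j) : ℝ) * (2 ^ j / (j.factorial : ℝ))
        = (n.descFactorial m : ℝ) * (2 ^ j * (-1 : ℝ) ^ (N - j) * (N.choose j : ℝ)) := by
    intro j hj
    have hj' : j ≤ N := Nat.lt_succ_iff.mp (mem_range.mp hj)
    have hsign : (-1 : ℝ) ^ (m + j + n) = (-1 : ℝ) ^ (N - j) := by
      have : m + j + n = 2 * (m + j) + (N - j) := by omega
      rw [this, pow_add, pow_mul]
      norm_num
    have hdesc : (n.descFactorial (m + j) : ℝ)
        = (N.descFactorial j : ℝ) * (n.descFactorial m : ℝ) := by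
      have := Nat.descFactorial_mul_descFactorial (n := n) (k := m) (m := m + j)
        (Nat.le_add_right m j)
      simp only [Nat.add_sub_cancel_left] at this
      exact_mod_cast congrArg (Nat.cast (R := ℝ)) this.symm
    have hNj : (N.descFactorial j : ℝ) = (j.factorial : ℝ) * (N.choose j : ℝ) := by
      exact_mod_cast congrArg (Nat.cast (R := ℝ)) (Nat.descFactorial_eq_factorial_mul_choose N j)
    have hfne : (j.factorial : ℝ) ≠ 0 := Nat.cast_ne_zero.mpr (Nat.factorial_ne_zero _)
    rw [hsign, hdesc, hNj]
    field_simp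
  rw [Finset.sum_congr rfl hterm, ← Finset.mul_sum, ← add_pow (2 : ℝ) (-1) N]
  norm_num

/-- `z_n = Σ_{l=0}^{n} (n!/(n-l)!) z₀^{l+1}` satisfies the discrete quadratic map
`z_{n+1} - z_n = Σ'_{k₁+k₂ ≤ n} ((-1)^{k₁+k₂+n}/(k₁! k₂!)) z_{k₁} z_{k₂} n!/(n-k₁-k₂)!`. -/
theorem discrete_quadratic_map_solution (z₀ : ℝ) (z : ℕ → ℝ)
    (hz : ∀ n : ℕ, z n = ∑ l ∈ range (n + 1), (n.descFactorial l : ℝ) * z₀ ^ (l + 1)) :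
    ∀ n : ℕ, z (n + 1) - z n
      = ∑ p ∈ (range (n + 1) ×ˢ range (n + 1)).filter (fun p => p.1 + p.2 ≤ n),
          (-1 : ℝ) ^ (p.1 + p.2 + n) / ((p.1.factorial : ℝ) * (p.2.factorial : ℝ))
            * z p.1 * z p.2 * (n.descFactorial (p.1 + p.2) : ℝ) := by
  intro n
  -- LHS = ∑ m ∈ range (n+1), (m+1) * d_n m * z₀^(m+2)
  have hLHS : z (n + 1) - z n
      = ∑ m ∈ range (n + 1), ((m : ℝ) + 1) * (n.descFactorial m : ℝ) * z₀ ^ (m + 2) := by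
    rw [hz (n + 1), hz n]
    rw [Finset.sum_range_succ' (fun l => ((n + 1).descFactorial l : ℝ) * z₀ ^ (l + 1)) (n + 1)]
    rw [Finset.sum_range_succ' (fun l => (n.descFactorial l : ℝ) * z₀ ^ (l + 1)) n]
    simp only [Nat.descFactorial_zero, Nat.cast_one, one_mul, pow_one,
      Nat.succ_descFactorial_succ]
    have hlast : (n.descFactorial (n + 1) : ℝ) * z₀ ^ (n + 2) = 0 := by
      rw [Nat.descFactorial_of_lt (Nat.lt_succ_self n)]; simp
    have : (∑ m ∈ range n, (n.descFactorial (m + 1) : ℝ) * z₀ ^ (m + 1 + 1))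
        = ∑ m ∈ range (n + 1), (n.descFactorial (m + 1) : ℝ) * z₀ ^ (m + 1 + 1) := by
      rw [Finset.sum_range_succ, hlast, add_zero]
    rw [this, add_sub_add_right_eq_sub, ← Finset.sum_sub_distrib]
    refine Finset.sum_congr rfl fun m hm => ?_
    have hm' : m ≤ n := Nat.lt_succ_iff.mp (mem_range.mp hm)
    have hd : (n.descFactorial (m + 1) : ℝ) = ((n : ℝ) - m) * (n.descFactorial m : ℝ) := by
      rw [Nat.descFactorial_succ]
      push_cast [Nat.cast_sub hm']
      ring
    rw [hd]
    push_cast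
    ring
  rw [hLHS]
  -- now the RHS
  set D := (range (n + 1) ×ˢ range (n + 1)).filter (fun p : ℕ × ℕ => p.1 + p.2 ≤ n) with hD
  have hDbi : D = (range (n + 1)).biUnion (fun k => Finset.HasAntidiagonal.antidiagonal k) := by
    ext p
    simp only [hD, mem_filter, mem_product, mem_range, mem_biUnion, Finset.HasAntidiagonal.mem_antidiagonal]
    constructor
    · rintro ⟨⟨h1, h2⟩, h3⟩
      exact ⟨p.1 + p.2, by omega, rfl⟩
    · rintro ⟨k, hk, hpk⟩
      omega
  have hdisj : (↑(range (n + 1)) : Set ℕ).PairwiseDisjoint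
      (fun k => (Finset.HasAntidiagonal.antidiagonal k : Finset (ℕ × ℕ))) := by
    intro a _ b _ hab
    simp only [Finset.disjoint_left]
    intro p hpa hpb
    rw [Finset.HasAntidiagonal.mem_antidiagonal] at hpa hpb
    exact hab (hpa ▸ hpb)
  have hzcoeff : ∀ p : ℕ, z p = (p.factorial : ℝ) * PowerSeries.coeff p (dqUU z₀ * dqVV) := by
    intro p; rw [hz p, dq_coeff_UV]
  -- sum over D of original = sum over D of G
  have hstep : ∀ p : ℕ × ℕ, p ∈ D →
      (-1 : ℝ) ^ (p.1 + p.2 + n) / ((p.1.factorial : ℝ) * (p.2.factorial : ℝ))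
            * z p.1 * z p.2 * (n.descFactorial (p.1 + p.2) : ℝ)
      = (-1 : ℝ) ^ (p.1 + p.2 + n) * (n.descFactorial (p.1 + p.2) : ℝ)
          * (PowerSeries.coeff p.1 (dqUU z₀ * dqVV)
              * PowerSeries.coeff p.2 (dqUU z₀ * dqVV)) := by
    intro p _
    rw [hzcoeff p.1, hzcoeff p.2]
    have h1 : (p.1.factorial : ℝ) ≠ 0 := Nat.cast_ne_zero.mpr (Nat.factorial_ne_zero _)
    have h2 : (p.2.factorial : ℝ) ≠ 0 := Nat.cast_ne_zero.mpr (Nat.factorial_ne_zero _)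
    field_simp
  rw [Finset.sum_congr rfl hstep]
  -- group by antidiagonals, use power series multiplication
  rw [hDbi, Finset.sum_biUnion hdisj]
  have hinner : ∀ k ∈ range (n + 1),
      (∑ p ∈ Finset.HasAntidiagonal.antidiagonal k,
        (-1 : ℝ) ^ (p.1 + p.2 + n) * (n.descFactorial (p.1 + p.2) : ℝ)
          * (PowerSeries.coeff p.1 (dqUU z₀ * dqVV)
              * PowerSeries.coeff p.2 (dqUU z₀ * dqVV)))
      = ∑ p ∈ Finset.HasAntidiagonal.antidiagonal k,
          (-1 : ℝ) ^ (p.1 + p.2 + n) * (n.descFactorial (p.1 + p.2) : ℝ)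
            * (((p.1 : ℝ) + 1) * z₀ ^ (p.1 + 2) * (2 ^ p.2 / (p.2.factorial : ℝ))) := by
    intro k _
    have e1 : (∑ p ∈ Finset.HasAntidiagonal.antidiagonal k,
        (-1 : ℝ) ^ (p.1 + p.2 + n) * (n.descFactorial (p.1 + p.2) : ℝ)
          * (PowerSeries.coeff p.1 (dqUU z₀ * dqVV)
              * PowerSeries.coeff p.2 (dqUU z₀ * dqVV)))
        = (-1 : ℝ) ^ (k + n) * (n.descFactorial k : ℝ)
            * PowerSeries.coeff k ((dqUU z₀ * dqVV) * (dqUU z₀ * dqVV)) := by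
      rw [PowerSeries.coeff_mul, Finset.mul_sum]
      refine Finset.sum_congr rfl fun p hp => ?_
      rw [Finset.HasAntidiagonal.mem_antidiagonal] at hp
      rw [hp]
    have e2 : (dqUU z₀ * dqVV) * (dqUU z₀ * dqVV) = (dqUU z₀ * dqUU z₀) * (dqVV * dqVV) := by
      ring
    rw [e1, e2, PowerSeries.coeff_mul, Finset.mul_sum]
    refine Finset.sum_congr rfl fun p hp => ?_
    rw [Finset.HasAntidiagonal.mem_antidiagonal] at hp
    rw [dq_coeff_U2, dq_coeff_V2, hp]
  rw [Finset.sum_congr rfl hinner, ← Finset.sum_biUnion hdisj, ← hDbi]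
  -- now D-sum of explicit function; split as iterated sum
  have hsplit : (∑ p ∈ D,
      (-1 : ℝ) ^ (p.1 + p.2 + n) * (n.descFactorial (p.1 + p.2) : ℝ)
        * (((p.1 : ℝ) + 1) * z₀ ^ (p.1 + 2) * (2 ^ p.2 / (p.2.factorial : ℝ))))
      = ∑ m ∈ range (n + 1), ∑ j ∈ range (n + 1 - m),
          (-1 : ℝ) ^ (m + j + n) * (n.descFactorial (m + j) : ℝ)
            * (((m : ℝ) + 1) * z₀ ^ (m + 2) * (2 ^ j / (j.factorial : ℝ))) := by
    rw [hD, Finset.sum_filter, Finset.sum_product]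
    refine Finset.sum_congr rfl fun m hm => ?_
    rw [← Finset.sum_filter]
    have : (range (n + 1)).filter (fun j => m + j ≤ n) = range (n + 1 - m) := by
      ext j; simp only [mem_filter, mem_range]; omega
    rw [this]
  rw [hsplit]
  refine Finset.sum_congr rfl fun m hm => ?_
  have hm' : m ≤ n := Nat.lt_succ_iff.mp (mem_range.mp hm)
  have : (∑ j ∈ range (n + 1 - m),
      (-1 : ℝ) ^ (m + j + n) * (n.descFactorial (m + j) : ℝ)
        * (((m : ℝ) + 1) * z₀ ^ (m + 2) * (2 ^ j / (j.factorial : ℝ))))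
      = (((m : ℝ) + 1) * z₀ ^ (m + 2)) * ∑ j ∈ range (n + 1 - m),
          (-1 : ℝ) ^ (m + j + n) * (n.descFactorial (m + j) : ℝ)
            * (2 ^ j / (j.factorial : ℝ)) := by
    rw [Finset.mul_sum]
    refine Finset.sum_congr rfl fun j _ => ?_
    ring
  rw [this, dq_key_binom n m hm']
  ring
end

section
/- If z_n = Σ_{l=0}^{n} (n!/(n-l)!)·z₀^{l+1} and w_n = z_n/n!, then w_n = Σ_{l=0}^{n} z₀^{l+1}/(n-l)! and w satisfies (n+1)·w_{n+1} - w_n = Σ' over k₁+k₂ ≤ n of (-1)^{k₁+k₂+n}·w_{k₁}·w_{k₂}/(n-k₁-k₂)!. -/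
open Finset

private lemma negpow (s t : ℕ) (h : s % 2 = t % 2) : (-1:ℝ)^s = (-1:ℝ)^t := by
  rw [neg_one_pow_eq_pow_mod_two, h, ← neg_one_pow_eq_pow_mod_two]

private lemma row_sum (K : ℕ) :
    ∑ j ∈ range (K+1), (-1:ℝ)^(K-j) / (j.factorial * (K-j).factorial)
      = (0:ℝ)^K / K.factorial := by
  have h := add_pow (1:ℝ) (-1) K
  simp only [one_pow, one_mul] at h
  norm_num at h
  rw [h, Finset.sum_div]
  refine Finset.sum_congr rfl fun j hj => ?_
  have hjK : j ≤ K := Nat.lt_succ_iff.mp (mem_range.mp hj)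
  rw [Nat.cast_choose ℝ hjK]
  have h1 : (j.factorial : ℝ) ≠ 0 := by positivity
  have h2 : ((K-j).factorial : ℝ) ≠ 0 := by positivity
  have h3 : (K.factorial : ℝ) ≠ 0 := by positivity
  field_simp

private lemma simplex_sum (M : ℕ) :
    ∑ i ∈ range (M+1), ∑ j ∈ range (M+1-i),
        (-1:ℝ)^(M-i-j) / (i.factorial * j.factorial * (M-i-j).factorial)
      = 1 / M.factorial := by
  have key : ∀ i ∈ range (M+1), ∑ j ∈ range (M+1-i),
      (-1:ℝ)^(M-i-j) / (i.factorial * j.factorial * (M-i-j).factorial)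
      = (1 / i.factorial) * ((0:ℝ)^(M-i) / (M-i).factorial) := by
    intro i hi
    have hiM : i ≤ M := Nat.lt_succ_iff.mp (mem_range.mp hi)
    rw [← row_sum (M - i), Finset.mul_sum]
    have h' : M + 1 - i = (M - i) + 1 := by omega
    rw [h']
    refine Finset.sum_congr rfl fun j hj => ?_
    have h1 : (j.factorial : ℝ) ≠ 0 := by positivity
    have h2 : ((i.factorial : ℝ)) ≠ 0 := by positivity
    have h3 : ((M-i-j).factorial : ℝ) ≠ 0 := by positivity
    field_simp
  rw [Finset.sum_congr rfl key, Finset.sum_eq_single M]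
  · simp
  · intro i hi hne
    have : M - i ≠ 0 := by have := mem_range.mp hi; omega
    rw [zero_pow this]
    simp
  · intro h; simp at h

private lemma tri (N : ℕ) (h : ℕ → ℕ → ℝ) :
    ∑ p ∈ range (N+1), ∑ a ∈ range (p+1), h p a
      = ∑ a ∈ range (N+1), ∑ i ∈ range (N+1-a), h (a+i) a := by
  have step1 : ∀ p ∈ range (N+1), ∑ a ∈ range (p+1), h p a
      = ∑ a ∈ range (N+1), if a ≤ p then h p a else 0 := by
    intro p hp
    have hpN := Nat.lt_succ_iff.mp (mem_range.mp hp)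
    rw [← Finset.sum_filter]
    have : (range (N+1)).filter (fun a => a ≤ p) = range (p+1) := by
      ext a; simp [Nat.lt_succ_iff]; omega
    rw [this]
  rw [Finset.sum_congr rfl step1, Finset.sum_comm]
  refine Finset.sum_congr rfl fun a ha => ?_
  rw [← Finset.sum_filter]
  have : (range (N+1)).filter (fun p => a ≤ p) = Ico a (N+1) := by
    ext p; simp; omega
  rw [this, Finset.sum_Ico_eq_sum_range]

private lemma simplex_comm (M : ℕ) (u : ℕ → ℕ → ℝ) :
    ∑ i ∈ range (M+1), ∑ b ∈ range (M+1-i), u i b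
      = ∑ b ∈ range (M+1), ∑ i ∈ range (M+1-b), u i b := by
  have e : ∀ (v : ℕ → ℕ → ℝ), ∑ i ∈ range (M+1), ∑ b ∈ range (M+1-i), v i b
      = ∑ i ∈ range (M+1), ∑ b ∈ range (M+1), if i + b ≤ M then v i b else 0 := by
    intro v
    refine Finset.sum_congr rfl fun i hi => ?_
    rw [← Finset.sum_filter]
    have : (range (M+1)).filter (fun b => i + b ≤ M) = range (M+1-i) := by
      ext b; simp [Nat.lt_succ_iff]; omega
    rw [this]
  rw [e, e (fun b i => u i b), Finset.sum_comm]
  refine Finset.sum_congr rfl fun b _ => Finset.sum_congr rfl fun i _ => ?_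
  rw [Nat.add_comm]

private lemma prodsum (n : ℕ) (f : ℕ × ℕ → ℝ) :
    ∑ p ∈ (range (n+1) ×ˢ range (n+1)).filter (fun p => p.1 + p.2 ≤ n), f p
      = ∑ a ∈ range (n+1), ∑ b ∈ range (n+1-a), f (a, b) := by
  rw [Finset.sum_filter, Finset.sum_product]
  refine Finset.sum_congr rfl fun a ha => ?_
  rw [← Finset.sum_filter]
  have : (range (n+1)).filter (fun b => a + b ≤ n) = range (n+1-a) := by
    ext b; simp [Nat.lt_succ_iff]; omega
  rw [this]

private lemma expand2 (c D : ℝ) (m k : ℕ) (A x B y : ℕ → ℝ) :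
    c * (∑ a ∈ range m, A a / x a) * (∑ b ∈ range k, B b / y b) / D
      = ∑ a ∈ range m, ∑ b ∈ range k, c * A a * B b / (x a * y b * D) := by
  rw [mul_assoc, Finset.sum_mul_sum, Finset.mul_sum, Finset.sum_div]
  refine Finset.sum_congr rfl fun a _ => ?_
  rw [Finset.mul_sum, Finset.sum_div]
  refine Finset.sum_congr rfl fun b _ => ?_
  ring

/-- Borel regularization: if `z_n = Σ_{l=0}^n (n!/(n-l)!) z₀^{l+1}` and `w_n = z_n/n!`,
then `w_n = Σ_{l=0}^n z₀^{l+1}/(n-l)!` and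
`(n+1) w_{n+1} - w_n = Σ'_{k₁+k₂ ≤ n} (-1)^{k₁+k₂+n} w_{k₁} w_{k₂}/(n-k₁-k₂)!`. -/
theorem borel_regularized_map (z₀ : ℝ) (z w : ℕ → ℝ)
    (hz : ∀ n : ℕ, z n = ∑ l ∈ range (n + 1), (n.descFactorial l : ℝ) * z₀ ^ (l + 1))
    (hw : ∀ n : ℕ, w n = z n / (n.factorial : ℝ)) :
    (∀ n : ℕ, w n = ∑ l ∈ range (n + 1), z₀ ^ (l + 1) / ((n - l).factorial : ℝ)) ∧
    (∀ n : ℕ, ((n : ℝ) + 1) * w (n + 1) - w n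
      = ∑ p ∈ (range (n + 1) ×ˢ range (n + 1)).filter (fun p => p.1 + p.2 ≤ n),
          (-1 : ℝ) ^ (p.1 + p.2 + n) * w p.1 * w p.2
            / (((n - p.1 - p.2).factorial : ℝ))) := by
  have part1 : ∀ n : ℕ, w n = ∑ l ∈ range (n + 1), z₀ ^ (l + 1) / ((n - l).factorial : ℝ) := by
    intro n
    rw [hw n, hz n, Finset.sum_div]
    refine Finset.sum_congr rfl fun l hl => ?_
    have hln : l ≤ n := Nat.lt_succ_iff.mp (mem_range.mp hl)
    have key : (((n-l).factorial : ℝ)) * (n.descFactorial l : ℝ) = (n.factorial : ℝ) := by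
      exact_mod_cast congrArg (Nat.cast : ℕ → ℝ) (Nat.factorial_mul_descFactorial hln)
    have h1 : ((n-l).factorial : ℝ) ≠ 0 := by positivity
    have h2 : ((n.factorial : ℝ)) ≠ 0 := by positivity
    field_simp
    linear_combination z₀ ^ (l+1) * key
  refine ⟨part1, fun n => ?_⟩
  have lhs_eq : ((n : ℝ) + 1) * w (n + 1) - w n
      = ∑ l ∈ range (n+1), ((l:ℝ)+1) * z₀^(l+2) / ((n-l).factorial : ℝ) := by
      rw [part1 (n+1), part1 n, Finset.sum_range_succ, mul_add, Finset.mul_sum]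
      have last : ((n:ℝ)+1) * (z₀ ^ (n+1+1) / (((n+1) - (n+1)).factorial : ℝ))
          = ((n:ℝ)+1) * z₀^(n+2) := by simp
      rw [last, add_sub_right_comm, ← Finset.sum_sub_distrib]
      have step : ∀ l ∈ range (n+1),
          ((n:ℝ)+1) * (z₀^(l+1) / (((n+1)-l).factorial : ℝ)) - z₀^(l+1)/((n-l).factorial : ℝ)
          = (l:ℝ) * z₀^(l+1) / (((n+1)-l).factorial : ℝ) := by
        intro l hl
        have hln : l ≤ n := Nat.lt_succ_iff.mp (mem_range.mp hl)
        have e1 : (n+1) - l = (n - l) + 1 := by omega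
        rw [e1, Nat.factorial_succ]
        have h1 : ((n-l).factorial : ℝ) ≠ 0 := by positivity
        have h2 : (((n-l : ℕ) : ℝ)) + 1 ≠ 0 := by positivity
        have e2 : ((n - l : ℕ) : ℝ) = (n : ℝ) - l := by
          push_cast [Nat.cast_sub hln]; ring
        push_cast
        rw [e2] at h2 ⊢
        field_simp
        ring
      rw [Finset.sum_congr rfl step]
      rw [Finset.sum_range_succ' (fun l => (l:ℝ) * z₀^(l+1) / (((n+1)-l).factorial : ℝ)) n]
      simp only [Nat.cast_zero, zero_mul, zero_div, add_zero]
      rw [Finset.sum_range_succ]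
      have last2 : ((n:ℝ)+1) * z₀^(n+2) / ((n-n).factorial : ℝ) = ((n:ℝ)+1) * z₀^(n+2) := by simp
      rw [last2]
      congr 1
      refine Finset.sum_congr rfl fun l hl => ?_
      have e3 : (n+1) - (l+1) = n - l := by omega
      rw [e3]
      push_cast
      ring
  have rhs_eq : ∑ p ∈ (range (n + 1) ×ˢ range (n + 1)).filter (fun p => p.1 + p.2 ≤ n),
          (-1 : ℝ) ^ (p.1 + p.2 + n) * w p.1 * w p.2
            / (((n - p.1 - p.2).factorial : ℝ))
      = ∑ l ∈ range (n+1), ((l:ℝ)+1) * z₀^(l+2) / ((n-l).factorial : ℝ) := by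
      rw [prodsum]
      -- T1 = T2
      have hT2 : ∑ a ∈ range (n+1), ∑ b ∈ range (n+1-a),
            (-1:ℝ)^((a,b).1+(a,b).2+n) * w (a,b).1 * w (a,b).2 / (((n-(a,b).1-(a,b).2).factorial : ℝ))
          = ∑ p1 ∈ range (n+1), ∑ a ∈ range (p1+1), ∑ p2 ∈ range (n+1-p1), ∑ b ∈ range (p2+1),
            (-1:ℝ)^(p1+p2+n) * z₀^(a+1) * z₀^(b+1)
              / (((p1-a).factorial : ℝ) * ((p2-b).factorial : ℝ) * ((n-p1-p2).factorial : ℝ)) := by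
        refine Finset.sum_congr rfl fun p1 hp1 => ?_
        have e : ∀ p2 ∈ range (n+1-p1),
            (-1:ℝ)^(p1+p2+n) * w p1 * w p2 / (((n-p1-p2).factorial : ℝ))
            = ∑ a ∈ range (p1+1), ∑ b ∈ range (p2+1),
                (-1:ℝ)^(p1+p2+n) * z₀^(a+1) * z₀^(b+1)
                  / (((p1-a).factorial : ℝ) * ((p2-b).factorial : ℝ) * ((n-p1-p2).factorial : ℝ)) := by
          intro p2 _
          rw [part1 p1, part1 p2]
          exact expand2 _ _ _ _ _ _ _ _
        rw [Finset.sum_congr rfl e, Finset.sum_comm]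
      rw [hT2]
      rw [tri n (fun p1 a => ∑ p2 ∈ range (n+1-p1), ∑ b ∈ range (p2+1),
            (-1:ℝ)^(p1+p2+n) * z₀^(a+1) * z₀^(b+1)
              / (((p1-a).factorial : ℝ) * ((p2-b).factorial : ℝ) * ((n-p1-p2).factorial : ℝ)))]
      have hT4 : ∀ a ∈ range (n+1), ∀ i ∈ range (n+1-a),
          (∑ p2 ∈ range (n+1-(a+i)), ∑ b ∈ range (p2+1),
            (-1:ℝ)^((a+i)+p2+n) * z₀^(a+1) * z₀^(b+1)
              / ((((a+i)-a).factorial : ℝ) * ((p2-b).factorial : ℝ) * ((n-(a+i)-p2).factorial : ℝ)))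
          = ∑ b ∈ range ((n-a-i)+1), ∑ j ∈ range ((n-a-i)+1-b),
            (-1:ℝ)^((a+i)+(b+j)+n) * z₀^(a+1) * z₀^(b+1)
              / ((((a+i)-a).factorial : ℝ) * (((b+j)-b).factorial : ℝ) * ((n-(a+i)-(b+j)).factorial : ℝ)) := by
        intro a ha i hi
        have ha' : a ≤ n := Nat.lt_succ_iff.mp (mem_range.mp ha)
        have hi' : i ≤ n - a := by have := mem_range.mp hi; omega
        have er : n+1-(a+i) = (n-a-i)+1 := by omega
        rw [er]
        exact tri (n-a-i) (fun p2 b =>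
            (-1:ℝ)^((a+i)+p2+n) * z₀^(a+1) * z₀^(b+1)
              / ((((a+i)-a).factorial : ℝ) * ((p2-b).factorial : ℝ) * ((n-(a+i)-p2).factorial : ℝ)))
      rw [Finset.sum_congr rfl (fun a ha => Finset.sum_congr rfl (hT4 a ha))]
      have hT5 : ∀ a ∈ range (n+1),
          (∑ i ∈ range (n+1-a), ∑ b ∈ range ((n-a-i)+1), ∑ j ∈ range ((n-a-i)+1-b),
            (-1:ℝ)^((a+i)+(b+j)+n) * z₀^(a+1) * z₀^(b+1)
              / ((((a+i)-a).factorial : ℝ) * (((b+j)-b).factorial : ℝ) * ((n-(a+i)-(b+j)).factorial : ℝ)))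
          = ∑ b ∈ range ((n-a)+1), ∑ i ∈ range ((n-a)+1-b), ∑ j ∈ range ((n-a-i)+1-b),
            (-1:ℝ)^((a+i)+(b+j)+n) * z₀^(a+1) * z₀^(b+1)
              / ((((a+i)-a).factorial : ℝ) * (((b+j)-b).factorial : ℝ) * ((n-(a+i)-(b+j)).factorial : ℝ)) := by
        intro a ha
        have ha' : a ≤ n := Nat.lt_succ_iff.mp (mem_range.mp ha)
        have e0 : n+1-a = (n-a)+1 := by omega
        rw [e0]
        have e1 : ∀ i ∈ range ((n-a)+1),
            (∑ b ∈ range ((n-a-i)+1), ∑ j ∈ range ((n-a-i)+1-b),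
              (-1:ℝ)^((a+i)+(b+j)+n) * z₀^(a+1) * z₀^(b+1)
                / ((((a+i)-a).factorial : ℝ) * (((b+j)-b).factorial : ℝ) * ((n-(a+i)-(b+j)).factorial : ℝ)))
            = ∑ b ∈ range ((n-a)+1-i), ∑ j ∈ range ((n-a-i)+1-b),
              (-1:ℝ)^((a+i)+(b+j)+n) * z₀^(a+1) * z₀^(b+1)
                / ((((a+i)-a).factorial : ℝ) * (((b+j)-b).factorial : ℝ) * ((n-(a+i)-(b+j)).factorial : ℝ)) := by
          intro i hi
          have hi' : i ≤ n - a := Nat.lt_succ_iff.mp (mem_range.mp hi)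
          have e2 : (n-a-i)+1 = (n-a)+1-i := by omega
          rw [e2]
        rw [Finset.sum_congr rfl e1]
        exact simplex_comm (n-a) (fun i b => ∑ j ∈ range ((n-a-i)+1-b),
              (-1:ℝ)^((a+i)+(b+j)+n) * z₀^(a+1) * z₀^(b+1)
                / ((((a+i)-a).factorial : ℝ) * (((b+j)-b).factorial : ℝ) * ((n-(a+i)-(b+j)).factorial : ℝ)))
      rw [Finset.sum_congr rfl hT5]
      have hT6 : ∀ a ∈ range (n+1), ∀ b ∈ range ((n-a)+1),
          (∑ i ∈ range ((n-a)+1-b), ∑ j ∈ range ((n-a-i)+1-b),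
            (-1:ℝ)^((a+i)+(b+j)+n) * z₀^(a+1) * z₀^(b+1)
              / ((((a+i)-a).factorial : ℝ) * (((b+j)-b).factorial : ℝ) * ((n-(a+i)-(b+j)).factorial : ℝ)))
          = z₀^(a+b+2) * (1 / ((n-a-b).factorial : ℝ)) := by
        intro a ha b hb
        have ha' : a ≤ n := Nat.lt_succ_iff.mp (mem_range.mp ha)
        have hb' : b ≤ n - a := Nat.lt_succ_iff.mp (mem_range.mp hb)
        have e2 : (n-a)+1-b = (n-a-b)+1 := by omega
        rw [e2]
        have e3 : ∀ i ∈ range ((n-a-b)+1),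
            (∑ j ∈ range ((n-a-i)+1-b),
              (-1:ℝ)^((a+i)+(b+j)+n) * z₀^(a+1) * z₀^(b+1)
                / ((((a+i)-a).factorial : ℝ) * (((b+j)-b).factorial : ℝ) * ((n-(a+i)-(b+j)).factorial : ℝ)))
            = ∑ j ∈ range ((n-a-b)+1-i),
              z₀^(a+b+2) * ((-1:ℝ)^(n-a-b-i-j)
                / ((i.factorial : ℝ) * (j.factorial : ℝ) * ((n-a-b-i-j).factorial : ℝ))) := by
          intro i hi
          have hi' : i ≤ n - a - b := Nat.lt_succ_iff.mp (mem_range.mp hi)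
          have e4 : (n-a-i)+1-b = (n-a-b)+1-i := by omega
          rw [e4]
          refine Finset.sum_congr rfl fun j hj => ?_
          have hj' : j ≤ n - a - b - i := by have := mem_range.mp hj; omega
          have f1 : (a+i)-a = i := by omega
          have f2 : (b+j)-b = j := by omega
          have f3 : n-(a+i)-(b+j) = n-a-b-i-j := by omega
          rw [f1, f2, f3, negpow ((a+i)+(b+j)+n) (n-a-b-i-j) (by omega)]
          rw [show a+b+2 = (a+1)+(b+1) by omega, pow_add]
          ring
        rw [Finset.sum_congr rfl e3]
        have e5 : ∀ i ∈ range ((n-a-b)+1),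
            (∑ j ∈ range ((n-a-b)+1-i),
              z₀^(a+b+2) * ((-1:ℝ)^(n-a-b-i-j)
                / ((i.factorial : ℝ) * (j.factorial : ℝ) * ((n-a-b-i-j).factorial : ℝ))))
            = z₀^(a+b+2) * (∑ j ∈ range ((n-a-b)+1-i), (-1:ℝ)^(n-a-b-i-j)
                / ((i.factorial : ℝ) * (j.factorial : ℝ) * ((n-a-b-i-j).factorial : ℝ))) := by
          intro i _
          rw [Finset.mul_sum]
        rw [Finset.sum_congr rfl e5, ← Finset.mul_sum, simplex_sum (n-a-b)]
      rw [Finset.sum_congr rfl (fun a ha => Finset.sum_congr rfl (hT6 a ha))]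
      have hT7 : ∀ a ∈ range (n+1),
          (∑ b ∈ range ((n-a)+1), z₀^(a+b+2) * (1 / ((n-a-b).factorial : ℝ)))
          = ∑ b ∈ range (n+1-a), z₀^((a+b)+2) * (1 / ((n-(a+b)).factorial : ℝ)) := by
        intro a ha
        have ha' : a ≤ n := Nat.lt_succ_iff.mp (mem_range.mp ha)
        have e0 : (n-a)+1 = n+1-a := by omega
        rw [e0]
        refine Finset.sum_congr rfl fun b _ => ?_
        rw [show n-a-b = n-(a+b) by omega]
      rw [Finset.sum_congr rfl hT7,
        ← tri n (fun l a => z₀^(l+2) * (1 / ((n-l).factorial : ℝ)))]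
      refine Finset.sum_congr rfl fun l hl => ?_
      rw [Finset.sum_const, Finset.card_range, nsmul_eq_mul]
      push_cast
      ring
  rw [lhs_eq]
  exact rhs_eq.symm
end
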